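/- arXiv:2008.13035 — 2 statements merged into one kernel-verified Lean document; each statement's English description precedes it below -/
import Mathlib

section
/- Let p, p̃ : [0,1] → ℝ be continuous and strictly positive, let α, β ∈ ℝ, and let λ, λ̃ ∈ ℝ with λ̃ ≠ 0. Let u, ũ : [0,1] → ℝ be twice continuously differentiable, satisfy BC(α,β), be strictly positive on the open interval (0,1), and solve −u''(x) = λ·p(x)·u(x) and −ũ''(x) = λ̃·p̃(x)·ũ(x) on [0,1]. If λ = λ̃ · min_{x ∈ [0,1]} ( p̃(x)/p(x) ), then λ ≠ 0 and p(x) = (λ̃/λ)·p̃(x) for all x ∈ [0,1]. -/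
open Real

/-- Separated boundary conditions BC(α,β) on [0,1]. -/
def BC (α β : ℝ) (w : ℝ → ℝ) : Prop :=
  w 0 * Real.cos α + deriv w 0 * Real.sin α = 0 ∧
  w 1 * Real.cos β + deriv w 1 * Real.sin β = 0

/-!
Let `M = min p̃/p`, so `λ = λ̃ M` and `p̃ - M p ≥ 0`. The Wronskian `W = ũ u' - ũ' u` satisfies
`W' = λ̃ (p̃ - M p) u ũ`, so `λ̃ W` is nondecreasing on `[0,1]`; it vanishes at both ends because
`u` and `ũ` satisfy the same boundary conditions. Hence `W' ≡ 0` on `(0,1)`, and as `u ũ > 0`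
there, `p̃ = M p`, first on `(0,1)` and then on `[0,1]` by continuity.
-/

open Set

noncomputable def wronskian (u v : ℝ → ℝ) (x : ℝ) : ℝ :=
  u x * deriv v x - deriv u x * v x

theorem hasDerivAt_wronskian_of_second_deriv {u v : ℝ → ℝ} {x a b : ℝ}
    (hu : ContDiff ℝ 2 u) (hv : ContDiff ℝ 2 v)
    (hu'' : -deriv (deriv u) x = a * u x) (hv'' : -deriv (deriv v) x = b * v x) :
    HasDerivAt (wronskian u v) ((a - b) * u x * v x) x := by
  have hW := ((hu.differentiable two_ne_zero x).hasDerivAt.mul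
    (hv.differentiable_deriv_two x).hasDerivAt).sub
    ((hu.differentiable_deriv_two x).hasDerivAt.mul (hv.differentiable two_ne_zero x).hasDerivAt)
  exact hW.congr_deriv (by linear_combination v x * hu'' - u x * hv'')

theorem wronskian_eq_zero_of_boundary {u v : ℝ → ℝ} {x θ : ℝ}
    (hu : u x * cos θ + deriv u x * sin θ = 0) (hv : v x * cos θ + deriv v x * sin θ = 0) :
    wronskian u v x = 0 := by
  unfold wronskian
  linear_combination (cos θ * deriv v x - sin θ * v x) * hu + (sin θ * u x - cos θ * deriv u x) * hv
    - (u x * deriv v x - deriv u x * v x) * sin_sq_add_cos_sq θ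

theorem wronskian_zero_of_BC {α β : ℝ} {u v : ℝ → ℝ} (hu : BC α β u) (hv : BC α β v) :
    wronskian u v 0 = 0 ∧ wronskian u v 1 = 0 :=
  ⟨wronskian_eq_zero_of_boundary hu.1 hv.1, wronskian_eq_zero_of_boundary hu.2 hv.2⟩

theorem eq_zero_of_hasDerivAt_nonneg_of_eq {f f' : ℝ → ℝ} {a b : ℝ}
    (hf : ContinuousOn f (Icc a b)) (hderiv : ∀ x ∈ Ioo a b, HasDerivAt f (f' x) x)
    (hnonneg : ∀ x ∈ Ioo a b, 0 ≤ f' x) (hab : f a = f b) :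
    ∀ x ∈ Ioo a b, f' x = 0 := by
  have hmono : MonotoneOn f (Icc a b) :=
    monotoneOn_of_hasDerivWithinAt_nonneg (convex_Icc a b) hf
      (fun x hx ↦ (hderiv x (by rwa [interior_Icc] at hx)).hasDerivWithinAt)
      (fun x hx ↦ hnonneg x (by rwa [interior_Icc] at hx))
  have hconst : ∀ x ∈ Icc a b, f x = f a := fun x hx ↦ le_antisymm
    (hab ▸ hmono hx (right_mem_Icc.2 (hx.1.trans hx.2)) hx.2)
    (hmono (left_mem_Icc.2 (hx.1.trans hx.2)) hx hx.1)
  intro x hx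
  have hloc : f =ᶠ[nhds x] fun _ ↦ f a :=
    Filter.eventuallyEq_of_mem (isOpen_Ioo.mem_nhds hx) fun y hy ↦ hconst y (Ioo_subset_Icc_self hy)
  exact (hderiv x hx).unique ((hasDerivAt_const x (f a)).congr_of_eventuallyEq hloc)

/-- The 'min' half of Theorem 2.1: first-eigenvalue Ambarzumyan-type theorem. -/
theorem stmt_2 (p pt : ℝ → ℝ) (hp : Continuous p) (hpt : Continuous pt)
    (hppos : ∀ x ∈ Set.Icc (0:ℝ) 1, 0 < p x)
    (hptpos : ∀ x ∈ Set.Icc (0:ℝ) 1, 0 < pt x)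
    (α β : ℝ) (l lt : ℝ) (hlt : lt ≠ 0) (u ut : ℝ → ℝ)
    (hu : ContDiff ℝ 2 u) (hut : ContDiff ℝ 2 ut)
    (hbc : BC α β u) (htbc : BC α β ut)
    (hupos : ∀ x ∈ Set.Ioo (0:ℝ) 1, 0 < u x)
    (hutpos : ∀ x ∈ Set.Ioo (0:ℝ) 1, 0 < ut x)
    (hode : ∀ x ∈ Set.Icc (0:ℝ) 1, -(deriv (deriv u) x) = l * p x * u x)
    (htode : ∀ x ∈ Set.Icc (0:ℝ) 1, -(deriv (deriv ut) x) = lt * pt x * ut x)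
    (M : ℝ) (hM : IsLeast ((fun x => pt x / p x) '' Set.Icc (0:ℝ) 1) M)
    (hl : l = lt * M) :
    l ≠ 0 ∧ ∀ x ∈ Set.Icc (0:ℝ) 1, p x = (lt / l) * pt x := by
  obtain ⟨x₀, hx₀, hMx₀⟩ := hM.1
  have hMpos : 0 < M := hMx₀ ▸ div_pos (hptpos x₀ hx₀) (hppos x₀ hx₀)
  have hMle : ∀ x ∈ Icc (0:ℝ) 1, M * p x ≤ pt x := fun x hx ↦
    (le_div_iff₀ (hppos x hx)).1 (hM.2 ⟨x, hx, rfl⟩)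
  have hW : ∀ x ∈ Icc (0:ℝ) 1,
      HasDerivAt (fun y ↦ lt * wronskian ut u y) (lt ^ 2 * ((pt x - M * p x) * (ut x * u x))) x :=
    fun x hx ↦ ((hasDerivAt_wronskian_of_second_deriv hut hu (htode x hx)
      (hode x hx)).const_mul lt).congr_deriv (by rw [hl]; ring)
  have hWcont : ContinuousOn (fun y ↦ lt * wronskian ut u y) (Icc 0 1) :=
    fun x hx ↦ (hW x hx).continuousAt.continuousWithinAt
  have hWends := wronskian_zero_of_BC htbc hbc
  have hW'_zero := eq_zero_of_hasDerivAt_nonneg_of_eq hWcont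
    (fun x hx ↦ hW x (Ioo_subset_Icc_self hx))
    (fun x hx ↦ mul_nonneg (sq_nonneg lt) <| mul_nonneg
      (sub_nonneg.2 (hMle x (Ioo_subset_Icc_self hx))) (mul_pos (hutpos x hx) (hupos x hx)).le)
    (by simp only [hWends.1, hWends.2])
  have hIoo : EqOn pt (fun x ↦ M * p x) (Ioo 0 1) := fun x hx ↦ by
    simpa [hlt, (hupos x hx).ne', (hutpos x hx).ne', sub_eq_zero] using hW'_zero x hx
  have hIcc : EqOn pt (fun x ↦ M * p x) (Icc 0 1) := by
    simpa only [closure_Ioo zero_ne_one] using hIoo.closure hpt (continuous_const.mul hp)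
  refine ⟨hl ▸ mul_ne_zero hlt hMpos.ne', fun x hx ↦ ?_⟩
  rw [hIcc hx, hl]
  field_simp
end

section
/- Let α ∈ (π/4, π] and β ∈ [0, 3π/4) with cos α · cos β − sin(α − β) < 0, let σ ∈ ℝ with σ ≠ 0, and let u : [0,1] → ℝ be twice continuously differentiable, not identically zero, with u''(x) = σ²·u(x) for all x ∈ [0,1] and u satisfying BC(α,β). Then a contradiction follows (no such u exists). -/
open Real

/-!
Since `d²/dx² - t² = (d/dx - t)(d/dx + t) = (d/dx + t)(d/dx - t)`, the functions `u' ± t u` are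
multiples of `exp (± t x)`, so a solution of `u'' = t² u` is
`u x = u 0 * cosh (t x) + u' 0 / t * sinh (t x)`. The boundary condition at `0` makes
`(u 0, u' 0)` a multiple `c • (sin α, -cos α)`, and the one at `1` then reads `c * D = 0` with
`D = t cosh t sin (α - β) + sinh t (t² sin α sin β - cos α cos β)`. The restrictions on `α, β`
force `sin (α - β) ≥ 0`; together with `sinh t ≤ t cosh t` and `cos α cos β < sin (α - β)` this
gives `D > 0`, hence `c = 0` and `u ≡ 0`.
-/

open Set

lemma sinh_le_mul_cosh {x : ℝ} (hx : 0 ≤ x) : sinh x ≤ x * cosh x := by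
  have hderiv (y : ℝ) : HasDerivAt (fun y => y * cosh y - sinh y) (y * sinh y) y :=
    (((hasDerivAt_id' y).mul (hasDerivAt_cosh y)).sub (hasDerivAt_sinh y)).congr_deriv (by ring)
  have hmono : MonotoneOn (fun y => y * cosh y - sinh y) (Ici 0) :=
    monotoneOn_of_hasDerivWithinAt_nonneg (convex_Ici 0)
      (fun y _ => (hderiv y).continuousAt.continuousWithinAt)
      (fun y _ => (hderiv y).hasDerivWithinAt)
      (fun y hy => mul_nonneg (interior_subset hy) (sinh_nonneg_iff.2 (interior_subset hy)))
  simpa using hmono self_mem_Ici hx hx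

lemma cos_lt_sin_of_mem_Ioo {x : ℝ} (hx : x ∈ Ioo (π / 4) (5 * π / 4)) : cos x < sin x := by
  have h : 0 < sin (x - π / 4) := sin_pos_of_pos_of_lt_pi (by linarith [hx.1]) (by linarith [hx.2])
  rw [sin_sub, sin_pi_div_four, cos_pi_div_four] at h
  nlinarith [sqrt_nonneg 2]

lemma sin_sub_nonneg_of_cos_mul_cos_lt {α β : ℝ} (hα : α ∈ Ioc (π / 4) π) (hβ : β ∈ Icc 0 π)
    (hcond : cos α * cos β < sin (α - β)) : 0 ≤ sin (α - β) := by
  have hsα : 0 ≤ sin α := sin_nonneg_of_nonneg_of_le_pi (by linarith [hα.1, pi_pos]) hα.2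
  have hsβ : 0 ≤ sin β := sin_nonneg_of_nonneg_of_le_pi hβ.1 hβ.2
  have hcs : cos α < sin α := cos_lt_sin_of_mem_Ioo ⟨hα.1, by linarith [hα.2, pi_pos]⟩
  -- If `sin (α - β) < 0` then `cos α cos β < 0`; for `cos α > 0` this contradicts
  -- `cos α cos β - sin (α - β) = cos β (cos α - sin α) + cos α sin β`.
  by_contra! hneg
  rw [sin_sub] at hcond hneg
  rcases le_or_gt (cos α) 0 with hcα | hcα
  · nlinarith [mul_nonneg (neg_nonneg.2 hcα) hsβ, mul_nonneg hsα (neg_nonneg.2 hcα)]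
  · nlinarith [mul_nonneg hcα.le hsβ, mul_pos hcα (sub_pos.2 hcs)]

lemma boundary_determinant_pos {α β t : ℝ} (hα : α ∈ Ioc (π / 4) π) (hβ : β ∈ Icc 0 π)
    (hcond : cos α * cos β < sin (α - β)) (ht : 0 < t) :
    0 < t * cosh t * sin (α - β) + sinh t * (t ^ 2 * sin α * sin β - cos α * cos β) := by
  have hs : 0 ≤ sin (α - β) := sin_sub_nonneg_of_cos_mul_cos_lt hα hβ hcond
  have hsα : 0 ≤ sin α := sin_nonneg_of_nonneg_of_le_pi (by linarith [hα.1, pi_pos]) hα.2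
  have hsβ : 0 ≤ sin β := sin_nonneg_of_nonneg_of_le_pi hβ.1 hβ.2
  have hsinh : 0 < sinh t := sinh_pos_iff.2 ht
  linear_combination mul_pos hsinh (sub_pos.2 hcond) +
    mul_nonneg hs (sub_nonneg.2 (sinh_le_mul_cosh ht.le)) +
    mul_nonneg (mul_nonneg hsinh.le (sq_nonneg t)) (mul_nonneg hsα hsβ)

lemma eq_zero_of_boundary_conditions {α β t p q : ℝ} (ht : t ≠ 0)
    (hdet : t * cosh t * sin (α - β) + sinh t * (t ^ 2 * sin α * sin β - cos α * cos β) ≠ 0)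
    (h0 : p * cos α + q * sin α = 0)
    (h1 : (p * cosh t + q / t * sinh t) * cos β + (p * t * sinh t + q * cosh t) * sin β = 0) :
    p = 0 ∧ q = 0 := by
  obtain ⟨c, rfl, rfl⟩ : ∃ c, p = c * sin α ∧ q = -c * cos α :=
    ⟨p * sin α - q * cos α, by linear_combination cos α * h0 - p * sin_sq_add_cos_sq α,
      by linear_combination sin α * h0 - q * sin_sq_add_cos_sq α⟩
  have hc :
      c * (t * cosh t * sin (α - β) + sinh t * (t ^ 2 * sin α * sin β - cos α * cos β)) = 0 := by
    rw [sin_sub]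
    field_simp at h1
    linear_combination h1
  simp [(mul_eq_zero.1 hc).resolve_right hdet]

lemma eqOn_mul_exp_of_hasDerivAt {y : ℝ → ℝ} {k a b : ℝ}
    (hy : ∀ x ∈ Icc a b, HasDerivAt y (k * y x) x) :
    EqOn y (fun x => y a * exp (k * (x - a))) (Icc a b) := by
  have hderiv (x : ℝ) (hx : x ∈ Icc a b) :
      HasDerivAt (fun x => y x * exp (-(k * (x - a)))) 0 x := by
    have hlin : HasDerivAt (fun x => -(k * (x - a))) (-k) x :=
      (((hasDerivAt_id' x).sub_const a).const_mul k).neg.congr_deriv (by ring)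
    exact ((hy x hx).mul hlin.exp).congr_deriv (by ring)
  intro x hx
  have hconst := constant_of_has_deriv_right_zero
    (fun x hx => (hderiv x hx).continuousAt.continuousWithinAt)
    (fun x hx => (hderiv x (Ico_subset_Icc_self hx)).hasDerivWithinAt) x hx
  simp only [sub_self, mul_zero, neg_zero, exp_zero, mul_one] at hconst
  dsimp only
  rw [← hconst, mul_assoc, ← exp_add, neg_add_cancel, exp_zero, mul_one]

lemma eq_cosh_sinh_of_hasDerivAt {u v : ℝ → ℝ} {t a b x : ℝ} (ht : t ≠ 0)
    (hu : ∀ x ∈ Icc a b, HasDerivAt u (v x) x) (hv : ∀ x ∈ Icc a b, HasDerivAt v (t ^ 2 * u x) x)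
    (hx : x ∈ Icc a b) :
    u x = u a * cosh (t * (x - a)) + v a / t * sinh (t * (x - a)) ∧
      v x = u a * t * sinh (t * (x - a)) + v a * cosh (t * (x - a)) := by
  have hplus := eqOn_mul_exp_of_hasDerivAt (k := t) (y := fun x => v x + t * u x)
    (fun x hx => ((hv x hx).add ((hu x hx).const_mul t)).congr_deriv (by ring)) hx
  have hminus := eqOn_mul_exp_of_hasDerivAt (k := -t) (y := fun x => v x - t * u x)
    (fun x hx => ((hv x hx).sub ((hu x hx).const_mul t)).congr_deriv (by ring)) hx
  simp only [neg_mul] at hplus hminus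
  rw [cosh_eq, sinh_eq]
  constructor
  · field_simp
    linear_combination hplus - hminus
  · linear_combination (hplus + hminus) / 2

/-- Constant-density part of Theorem 3.3: the string problem with density 1 has
no negative eigenvalue λ = −σ² when cos α cos β − sin(α−β) < 0 on
(π/4, π] × [0, 3π/4). -/
theorem stmt_16 (α β : ℝ)
    (hα : α ∈ Set.Ioc (Real.pi / 4) Real.pi)
    (hβ : β ∈ Set.Ico (0:ℝ) (3 * Real.pi / 4))
    (hcond : Real.cos α * Real.cos β - Real.sin (α - β) < 0)
    (σ : ℝ) (hσ : σ ≠ 0) (u : ℝ → ℝ) (hu : ContDiff ℝ 2 u)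
    (hne : ¬ ∀ x ∈ Set.Icc (0:ℝ) 1, u x = 0)
    (hode : ∀ x ∈ Set.Icc (0:ℝ) 1, deriv (deriv u) x = σ ^ 2 * u x)
    (hbc : BC α β u) :
    False := by
  obtain ⟨hbc0, hbc1⟩ := hbc
  have ht : 0 < |σ| := abs_pos.2 hσ
  have hu' (x : ℝ) : HasDerivAt u (deriv u x) x :=
    (hu.differentiable (by norm_num) x).hasDerivAt
  have hu'' (x : ℝ) (hx : x ∈ Icc 0 1) : HasDerivAt (deriv u) (|σ| ^ 2 * u x) x := by
    rw [sq_abs, ← hode x hx]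
    exact ((hu.deriv' (n := 1)).differentiable (by norm_num) x).hasDerivAt
  have hsol (x : ℝ) (hx : x ∈ Icc 0 1) :=
    eq_cosh_sinh_of_hasDerivAt ht.ne' (fun x _ => hu' x) hu'' hx
  obtain ⟨hu1, hdu1⟩ := hsol 1 ⟨zero_le_one, le_rfl⟩
  simp only [sub_zero, mul_one] at hu1 hdu1
  rw [hu1, hdu1] at hbc1
  have hdet := boundary_determinant_pos hα ⟨hβ.1, by linarith [hβ.2, pi_pos]⟩ (sub_neg.1 hcond) ht
  obtain ⟨hu0, hdu0⟩ := eq_zero_of_boundary_conditions ht.ne' hdet.ne' hbc0 hbc1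
  exact hne fun x hx => by simp [(hsol x hx).1, hu0, hdu0]
end
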